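/- arXiv:2412.17889 — 6 statements merged into one kernel-verified Lean document; each statement's English description precedes it below -/
import Mathlib

section
/- Let A be an n×n Hermitian quaternion matrix (conj(Aᵀ) = A) and let v be an index. Then the left row rank of the principal submatrix of A obtained by deleting row v and column v satisfies rank(A) - 2 ≤ rank(A minus row/column v) ≤ rank(A). -/
/-- The left row rank of a quaternion matrix: the dimension of the left
ℍ-span of its rows, i.e. the maximum number of left linearly independent rows. -/
noncomputable def leftRowRank {m n : Type*} (A : Matrix m n (Quaternion ℝ)) : ℕ :=
  Module.finrank (Quaternion ℝ) (Submodule.span (Quaternion ℝ) (Set.range fun i => A i))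

set_option synthInstance.maxHeartbeats 1000000 in
set_option maxHeartbeats 2000000 in
theorem rank_deleteVertex_Hermitian {n : ℕ}
    (A : Matrix (Fin (n + 1)) (Fin (n + 1)) (Quaternion ℝ)) (hA : A.IsHermitian)
    (v : Fin (n + 1)) :
    leftRowRank A - 2 ≤ leftRowRank (A.submatrix v.succAbove v.succAbove) ∧
    leftRowRank (A.submatrix v.succAbove v.succAbove) ≤ leftRowRank A := by
  classical
  set π : (Fin (n + 1) → Quaternion ℝ) →ₗ[Quaternion ℝ] (Fin n → Quaternion ℝ) :=
    LinearMap.funLeft (Quaternion ℝ) (Quaternion ℝ) v.succAbove with hπdef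
  set S : Submodule (Quaternion ℝ) (Fin (n + 1) → Quaternion ℝ) :=
    Submodule.span (Quaternion ℝ) (Set.range fun i => A i) with hSdef
  set S' : Submodule (Quaternion ℝ) (Fin (n + 1) → Quaternion ℝ) :=
    Submodule.span (Quaternion ℝ) (Set.range fun i => A (v.succAbove i)) with hS'def
  set T : Submodule (Quaternion ℝ) (Fin n → Quaternion ℝ) :=
    Submodule.span (Quaternion ℝ) (Set.range fun i => (A.submatrix v.succAbove v.succAbove) i) with hTdef
  have hT : T = S'.map π := by
    rw [hTdef, hS'def, Submodule.map_span, ← Set.range_comp]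
    rfl
  have hS'S : S' ≤ S := by
    apply Submodule.span_mono
    rintro _ ⟨i, rfl⟩
    exact ⟨_, rfl⟩
  have hrankA : leftRowRank A = Module.finrank (Quaternion ℝ) S := rfl
  have hrankB : leftRowRank (A.submatrix v.succAbove v.succAbove) = Module.finrank (Quaternion ℝ) T := rfl
  -- upper bound
  have hupper : Module.finrank (Quaternion ℝ) T ≤ Module.finrank (Quaternion ℝ) S := by
    rw [hT]
    exact le_trans (Submodule.finrank_map_le π S') (Submodule.finrank_mono hS'S)
  -- step 1 : finrank S ≤ finrank S' + 1
  have hstep1 : Module.finrank (Quaternion ℝ) S ≤ Module.finrank (Quaternion ℝ) S' + 1 := by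
    have hle : S ≤ Submodule.span (Quaternion ℝ) {A v} ⊔ S' := by
      rw [hSdef]
      apply Submodule.span_le.2
      rintro _ ⟨i, rfl⟩
      rcases eq_or_ne i v with rfl | h
      · exact Submodule.mem_sup_left (Submodule.mem_span_singleton_self _)
      · obtain ⟨j, rfl⟩ := Fin.exists_succAbove_eq h
        exact Submodule.mem_sup_right (Submodule.subset_span ⟨j, rfl⟩)
    calc Module.finrank (Quaternion ℝ) S ≤ Module.finrank (Quaternion ℝ) ↥(Submodule.span (Quaternion ℝ) {A v} ⊔ S') :=
          Submodule.finrank_mono hle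
      _ ≤ Module.finrank (Quaternion ℝ) ↥(Submodule.span (Quaternion ℝ) {A v} ⊔ S')
            + Module.finrank (Quaternion ℝ) ↥(Submodule.span (Quaternion ℝ) {A v} ⊓ S') := Nat.le_add_right _ _
      _ = Module.finrank (Quaternion ℝ) ↥(Submodule.span (Quaternion ℝ) ({A v} : Set (Fin (n+1) → Quaternion ℝ)))
            + Module.finrank (Quaternion ℝ) S' := Submodule.finrank_sup_add_finrank_inf_eq _ _
      _ ≤ 1 + Module.finrank (Quaternion ℝ) S' := by
          have : Module.finrank (Quaternion ℝ) ↥(Submodule.span (Quaternion ℝ) ({A v} : Set (Fin (n+1) → Quaternion ℝ))) ≤ 1 := by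
            simpa using finrank_span_le_card ({A v} : Set (Fin (n+1) → Quaternion ℝ))
          omega
      _ = Module.finrank (Quaternion ℝ) S' + 1 := by omega
  -- kernel of π has dimension 1
  have hπsurj : Function.Surjective π :=
    LinearMap.funLeft_surjective_of_injective (Quaternion ℝ) (Quaternion ℝ) _ (Fin.succAbove_right_injective)
  have hkerπ : Module.finrank (Quaternion ℝ) (LinearMap.ker π) = 1 := by
    have h1 := LinearMap.finrank_range_add_finrank_ker π
    rw [LinearMap.range_eq_top.2 hπsurj, finrank_top] at h1
    have h2 : Module.finrank (Quaternion ℝ) (Fin n → Quaternion ℝ) = n := by simp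
    have h3 : Module.finrank (Quaternion ℝ) (Fin (n + 1) → Quaternion ℝ) = n + 1 := by simp
    omega
  -- step 2 : finrank S' ≤ finrank T + 1
  have hstep2 : Module.finrank (Quaternion ℝ) S' ≤ Module.finrank (Quaternion ℝ) T + 1 := by
    set f : S' →ₗ[Quaternion ℝ] (Fin n → Quaternion ℝ) := π.domRestrict S' with hfdef
    have hrn := LinearMap.finrank_range_add_finrank_ker f
    have hrange : LinearMap.range f = T := by rw [hfdef, LinearMap.range_domRestrict, hT]
    have hker : Module.finrank (Quaternion ℝ) (LinearMap.ker f) ≤ 1 := by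
      have hg : ∃ g : (LinearMap.ker f) →ₗ[Quaternion ℝ] (LinearMap.ker π), Function.Injective g := by
        refine ⟨LinearMap.codRestrict _ ((S'.subtype).comp (LinearMap.ker f).subtype) ?_, ?_⟩
        · rintro ⟨⟨x, hx⟩, hxk⟩
          simpa [hfdef] using hxk
        · intro a b hab
          have := congrArg Subtype.val hab
          simp only [LinearMap.codRestrict_apply, LinearMap.comp_apply,
            Submodule.subtype_apply] at this
          exact Subtype.ext (Subtype.ext this)
      obtain ⟨g, hg⟩ := hg
      have h4 := LinearMap.finrank_le_finrank_of_injective hg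
      omega
    rw [hrange] at hrn
    omega
  refine ⟨?_, by rw [hrankA, hrankB]; exact hupper⟩
  rw [hrankA, hrankB]
  omega
end

section
/- Let G̃ be a quaternion unit gain graph with two pendant twin vertices v₁, v₂ (distinct pendant vertices sharing the same neighbor). Then the left row rank of the adjacency matrix of G̃ equals that of G̃ - v₁. -/
/-- A quaternion unit gain graph: a simple graph together with a gain function
assigning a unit quaternion to each oriented edge, with `φ(vu) = conj (φ(uv))`,
and gain `0` on non-edges. -/
structure QuatGainGraph (V : Type*) where
  G : SimpleGraph V
  gain : V → V → Quaternion ℝ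
  gain_unit : ∀ u v, G.Adj u v → ‖gain u v‖ = 1
  gain_symm : ∀ u v, gain v u = star (gain u v)
  gain_eq_zero : ∀ u v, ¬ G.Adj u v → gain u v = 0

/-- The (Hermitian) adjacency matrix of a quaternion unit gain graph. -/
def QuatGainGraph.adjMatrix {V : Type*} (Φ : QuatGainGraph V) :
    Matrix V V (Quaternion ℝ) := Matrix.of Φ.gain

theorem rank_deletePendantTwin {V : Type*} [Fintype V] [DecidableEq V]
    (Φ : QuatGainGraph V) (v₁ v₂ w : V) (hne : v₁ ≠ v₂)
    (h₁ : Φ.G.neighborSet v₁ = {w}) (h₂ : Φ.G.neighborSet v₂ = {w}) :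
    leftRowRank Φ.adjMatrix =
      leftRowRank (Φ.adjMatrix.submatrix
        (fun u : {u : V // u ≠ v₁} => (u : V)) (fun u : {u : V // u ≠ v₁} => (u : V))) := by
  classical
  set A := Φ.adjMatrix with hA
  -- adjacency facts
  have hadj1 : ∀ u, Φ.G.Adj v₁ u ↔ u = w := fun u => by
    rw [← SimpleGraph.mem_neighborSet, h₁, Set.mem_singleton_iff]
  have hadj2 : ∀ u, Φ.G.Adj v₂ u ↔ u = w := fun u => by
    rw [← SimpleGraph.mem_neighborSet, h₂, Set.mem_singleton_iff]
  have hAdj1w : Φ.G.Adj v₁ w := (hadj1 w).2 rfl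
  have hAdj2w : Φ.G.Adj v₂ w := (hadj2 w).2 rfl
  have hg_ne : ∀ (a b : V), Φ.G.Adj a b → Φ.gain a b ≠ 0 := by
    intro a b hab h0
    have := Φ.gain_unit a b hab
    rw [h0, norm_zero] at this
    norm_num at this
  have hg1w : Φ.gain v₁ w ≠ 0 := hg_ne _ _ hAdj1w
  have hg2w : Φ.gain v₂ w ≠ 0 := hg_ne _ _ hAdj2w
  have hgw1 : Φ.gain w v₁ ≠ 0 := hg_ne _ _ hAdj1w.symm
  have hgw2 : Φ.gain w v₂ ≠ 0 := hg_ne _ _ hAdj2w.symm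
  have hg1 : ∀ u, u ≠ w → Φ.gain v₁ u = 0 := fun u hu =>
    Φ.gain_eq_zero _ _ (fun h => hu ((hadj1 u).1 h))
  have hg2 : ∀ u, u ≠ w → Φ.gain v₂ u = 0 := fun u hu =>
    Φ.gain_eq_zero _ _ (fun h => hu ((hadj2 u).1 h))
  have hgc1 : ∀ u, u ≠ w → Φ.gain u v₁ = 0 := fun u hu => by
    rw [Φ.gain_symm, hg1 u hu, star_zero]
  have hgc2 : ∀ u, u ≠ w → Φ.gain u v₂ = 0 := fun u hu => by
    rw [Φ.gain_symm, hg2 u hu, star_zero]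
  have hAe : ∀ a b, A a b = Φ.gain a b := fun a b => rfl
  -- row v₁ is a left multiple of row v₂
  set c : Quaternion ℝ := Φ.gain v₁ w * (Φ.gain v₂ w)⁻¹ with hc
  have hrv₁ : A v₁ = c • A v₂ := by
    funext u
    rw [Pi.smul_apply, smul_eq_mul, hAe, hAe]
    by_cases hu : u = w
    · subst hu
      rw [hc, mul_assoc, inv_mul_cancel₀ hg2w, mul_one]
    · rw [hg1 u hu, hg2 u hu, mul_zero]
  -- the span of rows with index ≠ v₁
  set S : Submodule (Quaternion ℝ) (V → Quaternion ℝ) :=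
    Submodule.span (Quaternion ℝ) (Set.range fun i : {u : V // u ≠ v₁} => A (i : V)) with hS
  have hspan : Submodule.span (Quaternion ℝ) (Set.range fun i : V => A i) = S := by
    apply le_antisymm
    · rw [Submodule.span_le]
      rintro _ ⟨i, rfl⟩
      show A i ∈ S
      by_cases hi : i = v₁
      · subst hi
        rw [hrv₁]
        exact Submodule.smul_mem _ _
          (Submodule.subset_span ⟨⟨v₂, hne.symm⟩, rfl⟩)
      · exact Submodule.subset_span ⟨⟨i, hi⟩, rfl⟩
    · rw [Submodule.span_le]
      rintro _ ⟨i, rfl⟩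
      exact Submodule.subset_span ⟨(i : V), rfl⟩
  -- the coordinate-v₁ relation on S
  set c' : Quaternion ℝ := (Φ.gain w v₂)⁻¹ * Φ.gain w v₁ with hc'
  have key : ∀ x ∈ S, x v₁ = x v₂ * c' := by
    intro x hx
    induction hx using Submodule.span_induction with
    | mem x hx =>
      obtain ⟨⟨i, hi⟩, rfl⟩ := hx
      show A i v₁ = A i v₂ * c'
      by_cases hiw : i = w
      · subst hiw
        rw [hAe, hAe, hc', ← mul_assoc, mul_inv_cancel₀ hgw2, one_mul]
      · rw [hAe, hAe, hgc1 i hiw, hgc2 i hiw, zero_mul]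
    | zero => simp
    | add a b _ _ ha hb => simp [ha, hb, add_mul]
    | smul q a _ ha => simp [ha, mul_assoc]
  -- restriction map
  set π : (V → Quaternion ℝ) →ₗ[Quaternion ℝ] ({u : V // u ≠ v₁} → Quaternion ℝ) :=
    LinearMap.funLeft (Quaternion ℝ) (Quaternion ℝ) Subtype.val with hπ
  have hπ_apply : ∀ (x : V → Quaternion ℝ) (u : {u : V // u ≠ v₁}), π x u = x (u : V) :=
    fun x u => rfl
  have hinj : Function.Injective (π.comp S.subtype) := by
    rw [← LinearMap.ker_eq_bot, LinearMap.ker_eq_bot']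
    rintro ⟨x, hxS⟩ hx0
    have hx0' : π x = 0 := hx0
    have hzero : ∀ u : V, u ≠ v₁ → x u = 0 := by
      intro u hu
      have := congrFun hx0' ⟨u, hu⟩
      simpa [hπ_apply] using this
    have hx2 : x v₂ = 0 := hzero v₂ hne.symm
    have hx1 : x v₁ = 0 := by rw [key x hxS, hx2, zero_mul]
    apply Subtype.ext
    funext u
    by_cases hu : u = v₁
    · subst hu; exact hx1
    · exact hzero u hu
  have hrange : LinearMap.range (π.comp S.subtype) = Submodule.map π S := by
    rw [LinearMap.range_comp, Submodule.range_subtype]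
  have hmapS : Submodule.map π S =
      Submodule.span (Quaternion ℝ)
        (Set.range fun i : {u : V // u ≠ v₁} =>
          (A.submatrix (fun u : {u : V // u ≠ v₁} => (u : V))
            (fun u : {u : V // u ≠ v₁} => (u : V))) i) := by
    rw [hS, Submodule.map_span]
    congr 1
    rw [← Set.range_comp]
    rfl
  -- conclude
  unfold leftRowRank
  rw [hspan, ← hmapS, ← hrange]
  exact (LinearEquiv.ofInjective (π.comp S.subtype) hinj).finrank_eq
end

section
/- Let G̃ be a quaternion unit gain complete bipartite graph K̃_{a,b} with a,b ≥ 2 and parts V₁, V₂. Then the left row rank of A(K̃_{a,b}) equals 2 if and only if every 4-cycle u₁v₁u₂v₂ (u₁,u₂ ∈ V₁, v₁,v₂ ∈ V₂) has gain φ(u₁v₁)φ(v₁u₂)φ(u₂v₂)φ(v₂u₁) = 1. -/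
set_option maxHeartbeats 1000000


lemma quat_mul_star_of_norm_one {x : Quaternion ℝ} (h : ‖x‖ = 1) : x * star x = 1 := by
  rw [Quaternion.self_mul_star]
  have : Quaternion.normSq x = 1 := by
    rw [Quaternion.normSq_eq_norm_mul_self, h, one_mul]
  rw [this]; simp

lemma quat_star_mul_of_norm_one {x : Quaternion ℝ} (h : ‖x‖ = 1) : star x * x = 1 := by
  rw [Quaternion.star_mul_self]
  have : Quaternion.normSq x = 1 := by
    rw [Quaternion.normSq_eq_norm_mul_self, h, one_mul]
  rw [this]; simp

theorem rank_completeBipartite_eq_two_iff {a b : ℕ} (ha : 2 ≤ a) (hb : 2 ≤ b)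
    (A₁ : Matrix (Fin a) (Fin b) (Quaternion ℝ)) (hunit : ∀ i j, ‖A₁ i j‖ = 1) :
    leftRowRank (Matrix.fromBlocks 0 A₁ A₁.conjTranspose 0) = 2 ↔
      ∀ u₁ u₂ : Fin a, ∀ v₁ v₂ : Fin b, u₁ ≠ u₂ → v₁ ≠ v₂ →
        A₁ u₁ v₁ * star (A₁ u₂ v₁) * A₁ u₂ v₂ * star (A₁ u₁ v₂) = 1 := by
  classical
  have hne : ∀ i j, A₁ i j ≠ 0 := fun i j h => by
    have := hunit i j; rw [h, norm_zero] at this; norm_num at this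
  have hsne : ∀ i j, star (A₁ i j) ≠ 0 := fun i j h => by
    exact hne i j (by simpa using congrArg star h)
  set r : (Fin a ⊕ Fin b) → ((Fin a ⊕ Fin b) → Quaternion ℝ) :=
    fun i => Matrix.fromBlocks 0 A₁ A₁.conjTranspose 0 i with hr
  have hrl : ∀ u : Fin a, r (Sum.inl u) = Sum.elim (fun _ => 0) (fun v => A₁ u v) := by
    intro u; funext x; cases x <;> simp [hr, Matrix.fromBlocks]
  have hrr : ∀ v : Fin b, r (Sum.inr v) = Sum.elim (fun u => star (A₁ u v)) (fun _ => 0) := by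
    intro v; funext x; cases x <;> simp [hr, Matrix.fromBlocks, Matrix.conjTranspose]
  obtain ⟨u0⟩ : Nonempty (Fin a) := ⟨⟨0, by omega⟩⟩
  obtain ⟨v0⟩ : Nonempty (Fin b) := ⟨⟨0, by omega⟩⟩
  constructor
  · -- rank = 2 → gain condition
    intro hrank u₁ u₂ v₁ v₂ hu hv
    by_contra hgain
    set w : Fin 3 → ((Fin a ⊕ Fin b) → Quaternion ℝ) :=
      ![r (Sum.inl u₁), r (Sum.inl u₂), r (Sum.inr v₁)] with hw
    have hli : LinearIndependent (Quaternion ℝ) w := by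
      rw [Fintype.linearIndependent_iff]
      intro g hg
      have hpt : ∀ x, g 0 * w 0 x + g 1 * w 1 x + g 2 * w 2 x = 0 := by
        intro x
        have := congrFun hg x
        simpa [Fin.sum_univ_three, smul_eq_mul] using this
      have h2 : g 2 = 0 := by
        have := hpt (Sum.inl u₁)
        simp [hw, hrl, hrr] at this
        exact this.resolve_right (hne u₁ v₁)
      have e1 : g 0 * A₁ u₁ v₁ + g 1 * A₁ u₂ v₁ = 0 := by
        have := hpt (Sum.inr v₁); simpa [hw, hrl, hrr, h2] using this
      have e2 : g 0 * A₁ u₁ v₂ + g 1 * A₁ u₂ v₂ = 0 := by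
        have := hpt (Sum.inr v₂); simpa [hw, hrl, hrr, h2] using this
      have f1 : g 0 = -(g 1 * (A₁ u₂ v₁ * star (A₁ u₁ v₁))) := by
        have := congrArg (· * star (A₁ u₁ v₁)) (eq_neg_of_add_eq_zero_left e1)
        simpa [mul_assoc, quat_mul_star_of_norm_one (hunit u₁ v₁)] using this
      have f2 : g 0 = -(g 1 * (A₁ u₂ v₂ * star (A₁ u₁ v₂))) := by
        have := congrArg (· * star (A₁ u₁ v₂)) (eq_neg_of_add_eq_zero_left e2)
        simpa [mul_assoc, quat_mul_star_of_norm_one (hunit u₁ v₂)] using this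
      have h1 : g 1 = 0 := by
        by_contra h1
        have heq : g 1 * (A₁ u₂ v₁ * star (A₁ u₁ v₁)) = g 1 * (A₁ u₂ v₂ * star (A₁ u₁ v₂)) :=
          neg_inj.mp (f1.symm.trans f2)
        have heq2 : A₁ u₂ v₁ * star (A₁ u₁ v₁) = A₁ u₂ v₂ * star (A₁ u₁ v₂) :=
          mul_left_cancel₀ h1 heq
        apply hgain
        have h3 : star (A₁ u₂ v₁) * (A₁ u₂ v₁ * star (A₁ u₁ v₁)) =
            star (A₁ u₂ v₁) * (A₁ u₂ v₂ * star (A₁ u₁ v₂)) := by rw [heq2]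
        rw [← mul_assoc, quat_star_mul_of_norm_one (hunit u₂ v₁), one_mul] at h3
        calc A₁ u₁ v₁ * star (A₁ u₂ v₁) * A₁ u₂ v₂ * star (A₁ u₁ v₂)
            = A₁ u₁ v₁ * (star (A₁ u₂ v₁) * (A₁ u₂ v₂ * star (A₁ u₁ v₂))) := by
              rw [mul_assoc, mul_assoc]
          _ = A₁ u₁ v₁ * star (A₁ u₁ v₁) := by rw [← h3]
          _ = 1 := quat_mul_star_of_norm_one (hunit u₁ v₁)
      have h0 : g 0 = 0 := by
        have := f1; rw [h1] at this; simpa using this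
      intro i; fin_cases i <;> assumption
    exfalso
    have hsub : Submodule.span (Quaternion ℝ) (Set.range w) ≤
        Submodule.span (Quaternion ℝ)
          (Set.range fun i => Matrix.fromBlocks 0 A₁ A₁.conjTranspose 0 i) := by
      apply Submodule.span_le.mpr
      rintro x ⟨i, rfl⟩
      fin_cases i <;> exact Submodule.subset_span ⟨_, rfl⟩
    have h3 : Module.finrank (Quaternion ℝ)
        (Submodule.span (Quaternion ℝ) (Set.range w)) = 3 := by
      rw [finrank_span_eq_card hli]; simp
    have hle := Submodule.finrank_mono hsub
    rw [h3] at hle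
    unfold leftRowRank at hrank
    omega
  · -- gain condition → rank = 2
    intro hc
    have key : ∀ u v, A₁ u v0 * star (A₁ u0 v0) * A₁ u0 v = A₁ u v := by
      intro u v
      by_cases hu : u = u0
      · rw [hu, quat_mul_star_of_norm_one (hunit u0 v0), one_mul]
      · by_cases hv : v = v0
        · rw [hv, mul_assoc, quat_star_mul_of_norm_one (hunit u0 v0), mul_one]
        · have := hc u u0 v0 v hu (Ne.symm hv)
          have h2 := congrArg (· * A₁ u v) this
          simpa [mul_assoc, quat_star_mul_of_norm_one (hunit u v)] using h2
    have keystar : ∀ u v, star (A₁ u0 v) * A₁ u0 v0 * star (A₁ u v0) = star (A₁ u v) := by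
      intro u v
      have := congrArg star (key u v)
      simp only [star_mul, star_star] at this
      rw [← this, mul_assoc]
    set w : Fin 2 → ((Fin a ⊕ Fin b) → Quaternion ℝ) :=
      ![r (Sum.inl u0), r (Sum.inr v0)] with hw
    have hspan : Submodule.span (Quaternion ℝ)
          (Set.range fun i => Matrix.fromBlocks 0 A₁ A₁.conjTranspose 0 i)
        = Submodule.span (Quaternion ℝ) (Set.range w) := by
      apply le_antisymm
      · apply Submodule.span_le.mpr
        rintro x ⟨i, rfl⟩
        show Matrix.fromBlocks 0 A₁ A₁.conjTranspose 0 i ∈ _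
        rcases i with u | v
        · have hx : (Matrix.fromBlocks 0 A₁ A₁.conjTranspose 0) (Sum.inl u) =
              (A₁ u v0 * star (A₁ u0 v0)) • w 0 := by
            funext x
            cases x with
            | inl u' => simp [hw, hrl]
            | inr v => simp [hw, hrl, smul_eq_mul, ← key u v, mul_assoc]
          rw [hx]
          exact Submodule.smul_mem _ _ (Submodule.subset_span ⟨0, rfl⟩)
        · have hx : (Matrix.fromBlocks 0 A₁ A₁.conjTranspose 0) (Sum.inr v) =
              (star (A₁ u0 v) * A₁ u0 v0) • w 1 := by
            funext x
            cases x with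
            | inl u =>
              simp only [hw, hrr, smul_eq_mul]
              show star (A₁ u v) = star (A₁ u0 v) * A₁ u0 v0 * star (A₁ u v0)
              rw [keystar]
            | inr v' => simp [hw, hrr]
          rw [hx]
          exact Submodule.smul_mem _ _ (Submodule.subset_span ⟨1, rfl⟩)
      · apply Submodule.span_le.mpr
        rintro x ⟨i, rfl⟩
        fin_cases i <;> exact Submodule.subset_span ⟨_, rfl⟩
    have hli : LinearIndependent (Quaternion ℝ) w := by
      rw [Fintype.linearIndependent_iff]
      intro g hg
      have hpt : ∀ x, g 0 * w 0 x + g 1 * w 1 x = 0 := by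
        intro x
        have := congrFun hg x
        simpa [Fin.sum_univ_two, smul_eq_mul] using this
      have h0 : g 0 = 0 := by
        have := hpt (Sum.inr v0)
        simp [hw, hrl, hrr] at this
        exact this.resolve_right (hne u0 v0)
      have h1 : g 1 = 0 := by
        have := hpt (Sum.inl u0)
        simp [hw, hrl, hrr, h0] at this
        exact this.resolve_right (hne u0 v0)
      intro i; fin_cases i <;> assumption
    unfold leftRowRank
    rw [hspan, finrank_span_eq_card hli]
    simp
end

section
/- Any quaternion unit gain graph on the complete bipartite graph K_{a,b} (a,b ≥ 2) in which every 4-cycle has gain 1 has the property that the off-diagonal block A₁ of its adjacency matrix (rows indexed by one part, columns by the other) has left row rank 1; i.e., every row of A₁ is a nonzero left quaternion multiple of the first row. -/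
theorem rows_multiple_of_first_of_allFourCyclesTrivial {a b : ℕ} (ha : 2 ≤ a) (hb : 2 ≤ b)
    (A₁ : Matrix (Fin a) (Fin b) (Quaternion ℝ)) (hunit : ∀ i j, ‖A₁ i j‖ = 1)
    (h4 : ∀ u₁ u₂ : Fin a, ∀ v₁ v₂ : Fin b, u₁ ≠ u₂ → v₁ ≠ v₂ →
        A₁ u₁ v₁ * star (A₁ u₂ v₁) * A₁ u₂ v₂ * star (A₁ u₁ v₂) = 1) :
    leftRowRank A₁ = 1 ∧
      ∀ i : Fin a, ∃ k : Quaternion ℝ, k ≠ 0 ∧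
        ∀ j : Fin b, A₁ i j = k * A₁ ⟨0, by omega⟩ j := by
  set i0 : Fin a := ⟨0, by omega⟩
  set j0 : Fin b := ⟨0, by omega⟩
  have hns : ∀ i j, Quaternion.normSq (A₁ i j) = 1 := by
    intro i j
    rw [Quaternion.normSq_eq_norm_mul_self, hunit, one_mul]
  have hsm : ∀ i j, star (A₁ i j) * A₁ i j = 1 := by
    intro i j
    rw [Quaternion.star_mul_self, hns]; norm_num
  have hms : ∀ i j, A₁ i j * star (A₁ i j) = 1 := by
    intro i j
    rw [Quaternion.self_mul_star, hns]; norm_num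
  have hne : ∀ i j, A₁ i j ≠ 0 := by
    intro i j h
    have := hunit i j
    rw [h] at this; simp at this
  -- the multiplier
  set k : Fin a → Quaternion ℝ := fun i => A₁ i j0 * star (A₁ i0 j0) with hk
  have hkne : ∀ i, k i ≠ 0 := by
    intro i
    simp only [hk]
    exact mul_ne_zero (hne i j0) (star_ne_zero.mpr (hne i0 j0))
  have key : ∀ i j, A₁ i j = k i * A₁ i0 j := by
    intro i j
    by_cases hi : i = i0
    · subst hi
      simp only [hk]
      rw [hms, one_mul]
    · by_cases hj : j = j0
      · subst hj
        simp only [hk]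
        rw [mul_assoc, hsm, mul_one]
      · have h := h4 i i0 j0 j hi (fun h => hj h.symm)
        have := congrArg (· * A₁ i j) h
        simp only [one_mul] at this
        rw [mul_assoc _ (star (A₁ i j)) (A₁ i j), hsm, mul_one] at this
        rw [← this, hk]
  refine ⟨?_, fun i => ⟨k i, hkne i, fun j => key i j⟩⟩
  have hspan : Submodule.span (Quaternion ℝ) (Set.range fun i => A₁ i)
      = Submodule.span (Quaternion ℝ) {A₁ i0} := by
    apply le_antisymm
    · rw [Submodule.span_le]
      rintro _ ⟨i, rfl⟩
      have : A₁ i = k i • A₁ i0 := by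
        funext j; exact key i j
      show A₁ i ∈ _
      rw [this]
      exact Submodule.smul_mem _ _ (Submodule.subset_span rfl)
    · rw [Submodule.span_le]
      rintro _ rfl
      exact Submodule.subset_span ⟨i0, rfl⟩
  have hrow0 : A₁ i0 ≠ 0 := by
    intro h
    exact hne i0 j0 (by rw [h]; rfl)
  rw [leftRowRank, hspan]
  exact finrank_span_singleton hrow0
end

section
/- The 3×3 quaternion matrix [[0, b-1, 0],[conj(b)-1, 0, 1-a],[0, 1-conj(a), 0]] with a,b unit quaternions has left row rank 0 if a=1 and b=1, and has left row rank 2 otherwise (in particular its rank is never 1 or 3). -/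
open Submodule

lemma pair_indep {n : Type*} (u v : n → Quaternion ℝ) (i : n)
    (hu : u i ≠ 0) (hv : v i = 0) (hv0 : v ≠ 0) :
    LinearIndependent (Quaternion ℝ) ![u, v] := by
  rw [LinearIndependent.pair_iff]
  intro s t hst
  have hi := congrFun hst i
  simp only [Pi.add_apply, Pi.smul_apply, smul_eq_mul, hv, mul_zero, add_zero,
    Pi.zero_apply] at hi
  have hs : s = 0 := by
    rcases mul_eq_zero.1 hi with h | h
    · exact h
    · exact absurd h hu
  refine ⟨hs, ?_⟩
  obtain ⟨j, hj⟩ := Function.ne_iff.1 hv0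
  have hjj := congrFun hst j
  simp only [Pi.add_apply, Pi.smul_apply, smul_eq_mul, hs, zero_mul, zero_add,
    Pi.zero_apply] at hjj
  rcases mul_eq_zero.1 hjj with h | h
  · exact h
  · exact absurd h hj

lemma span_pair_rank (u v : Fin 3 → Quaternion ℝ) (i : Fin 3)
    (hu : u i ≠ 0) (hv : v i = 0) (hv0 : v ≠ 0) :
    Module.finrank (Quaternion ℝ)
      (span (Quaternion ℝ) (Set.range ![u, v])) = 2 := by
  rw [finrank_span_eq_card (pair_indep u v i hu hv hv0)]
  simp

theorem rank_threeByThree_gainMatrix (a b : Quaternion ℝ) (ha : ‖a‖ = 1) (hb : ‖b‖ = 1) :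
    (a = 1 ∧ b = 1 →
      leftRowRank !![0, b - 1, 0; star b - 1, 0, 1 - a; 0, 1 - star a, 0] = 0) ∧
    (¬ (a = 1 ∧ b = 1) →
      leftRowRank !![0, b - 1, 0; star b - 1, 0, 1 - a; 0, 1 - star a, 0] = 2) := by
  set A : Matrix (Fin 3) (Fin 3) (Quaternion ℝ) :=
    !![0, b - 1, 0; star b - 1, 0, 1 - a; 0, 1 - star a, 0] with hA
  constructor
  · rintro ⟨rfl, rfl⟩
    have hspan : span (Quaternion ℝ) (Set.range fun i => A i) = ⊥ := by
      rw [Submodule.span_eq_bot]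
      rintro x ⟨i, rfl⟩
      funext j
      fin_cases i <;> fin_cases j <;> simp [hA, Matrix.vecHead, Matrix.vecTail]
    rw [leftRowRank, hspan, finrank_bot]
  · intro h
    have key : ∀ (u v : Fin 3 → Quaternion ℝ) (i : Fin 3), u i ≠ 0 → v i = 0 → v ≠ 0 →
        span (Quaternion ℝ) (Set.range fun i => A i) =
          span (Quaternion ℝ) (Set.range ![u, v]) →
        leftRowRank A = 2 := by
      intro u v i hu hv hv0 hsp
      rw [leftRowRank, hsp, span_pair_rank u v i hu hv hv0]
    have hstar : ∀ x : Quaternion ℝ, x ≠ 1 → star x - 1 ≠ 0 := by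
      intro x hx hc
      have h2 : star (x - 1) = 0 := by rw [star_sub, star_one]; exact hc
      exact hx (sub_eq_zero.1 (star_eq_zero.1 h2))
    have hstar' : ∀ x : Quaternion ℝ, x ≠ 1 → 1 - star x ≠ 0 := by
      intro x hx hc
      have h2 : star (1 - x) = 0 := by rw [star_sub, star_one]; exact hc
      exact hx (sub_eq_zero.1 (star_eq_zero.1 h2)).symm
    by_cases hb1 : b = 1
    · have ha1 : a ≠ 1 := fun h' => (h ⟨h', hb1⟩).elim
      refine key (A 1) (A 2) 2 ?_ ?_ ?_ ?_
      · simpa [hA, Matrix.vecHead, Matrix.vecTail] using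
          (sub_ne_zero.2 fun hc => ha1 hc.symm)
      · simp [hA, Matrix.vecHead, Matrix.vecTail]
      · intro hc
        have := congrFun hc 1
        simp [hA, Matrix.vecHead, Matrix.vecTail] at this
        exact hstar' a ha1 this
      · apply le_antisymm <;> rw [Submodule.span_le] <;> rintro x ⟨i, rfl⟩
        · fin_cases i
          · have : A 0 = 0 := by
              funext j; fin_cases j <;>
                simp [hA, hb1, Matrix.vecHead, Matrix.vecTail]
            show A 0 ∈ _
            rw [this]; exact zero_mem _
          · exact subset_span ⟨0, rfl⟩
          · exact subset_span ⟨1, rfl⟩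
        · fin_cases i
          · exact subset_span ⟨1, rfl⟩
          · exact subset_span ⟨2, rfl⟩
    · by_cases ha1 : a = 1
      · -- rows: A0 = (0,b-1,0), A1 = (star b - 1,0,0), A2 = 0
        refine key (A 1) (A 0) 0 ?_ ?_ ?_ ?_
        · simpa [hA, Matrix.vecHead, Matrix.vecTail] using hstar b hb1
        · simp [hA]
        · intro hc
          have := congrFun hc 1
          simp [hA, Matrix.vecHead, Matrix.vecTail, sub_eq_zero] at this
          exact hb1 this
        · apply le_antisymm <;> rw [Submodule.span_le] <;> rintro x ⟨i, rfl⟩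
          · fin_cases i
            · exact subset_span ⟨1, rfl⟩
            · exact subset_span ⟨0, rfl⟩
            · have : A 2 = 0 := by
                funext j; fin_cases j <;>
                  simp [hA, ha1, Matrix.vecHead, Matrix.vecTail]
              show A 2 ∈ _
              rw [this]; exact zero_mem _
          · fin_cases i
            · exact subset_span ⟨1, rfl⟩
            · exact subset_span ⟨0, rfl⟩
      · -- rows: A0, A1 independent, A2 = c • A0
        refine key (A 1) (A 0) 0 ?_ ?_ ?_ ?_
        · simpa [hA, Matrix.vecHead, Matrix.vecTail] using hstar b hb1
        · simp [hA]
        · intro hc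
          have := congrFun hc 1
          simp [hA, Matrix.vecHead, Matrix.vecTail, sub_eq_zero] at this
          exact hb1 this
        · apply le_antisymm <;> rw [Submodule.span_le] <;> rintro x ⟨i, rfl⟩
          · fin_cases i
            · exact subset_span ⟨1, rfl⟩
            · exact subset_span ⟨0, rfl⟩
            · have hA2 : A 2 = ((1 - star a) * (b - 1)⁻¹) • A 0 := by
                funext j; fin_cases j <;>
                  simp [hA, Matrix.vecHead, Matrix.vecTail, mul_assoc,
                    inv_mul_cancel₀ (sub_ne_zero.2 hb1)]
              show A 2 ∈ _
              rw [hA2]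
              exact smul_mem _ _ (subset_span ⟨1, rfl⟩)
          · fin_cases i
            · exact subset_span ⟨1, rfl⟩
            · exact subset_span ⟨0, rfl⟩
end

section
/- Let G̃ be a canonical unicyclic quaternion unit gain graph of order n with girth g, different from a cycle: the cycle C_g has t ≥ 1 vertices each with a pendant star attached, and removing all pendant stars (and their attachment vertices) from the cycle leaves t paths, of which k have even order. Then r(G̃) = g + k and g ≡ k (mod 2), where r is the left row rank of the adjacency matrix. -/
private lemma baseg {g i i' o o' : ℕ} (ho : o < g) (ho' : o' < g)
    (h : i * g + o = i' * g + o') : i = i' ∧ o = o' := by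
  have key : ∀ a b x y : ℕ, x < g → y < g → a * g + x = b * g + y → a ≤ b := by
    intro a b x y hx hy hab
    by_contra hle
    have h1 : b + 1 ≤ a := by omega
    have := Nat.mul_le_mul_right g h1
    rw [add_mul, one_mul] at this
    omega
  have h1 : i = i' := le_antisymm (key _ _ _ _ ho ho' h) (key _ _ _ _ ho' ho h.symm)
  subst h1
  omega

private lemma li_of_pivots {K : Type*} [DivisionRing K] {ι η : Type*} [Fintype ι]
    (v : ι → η → K) (p : ι → η) (r : ι → ℕ) (hr : Function.Injective r)
    (h1 : ∀ i, v i (p i) ≠ 0)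
    (h2 : ∀ i j, r i < r j → v j (p i) = 0) :
    LinearIndependent K v := by
  rw [Fintype.linearIndependent_iff]
  intro f hf
  have key : ∀ n i, r i = n → f i = 0 := by
    intro n
    induction n using Nat.strong_induction_on with
    | _ n ih =>
      intro i hi
      have hev := congrFun hf (p i)
      simp only [Finset.sum_apply, Pi.smul_apply, smul_eq_mul, Pi.zero_apply] at hev
      rw [Finset.sum_eq_single i] at hev
      · rcases mul_eq_zero.mp hev with h | h
        · exact h
        · exact absurd h (h1 i)
      · intro j _ hj
        rcases lt_trichotomy (r j) (r i) with h | h | h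
        · rw [ih (r j) (hi ▸ h) j rfl, zero_mul]
        · exact absurd (hr h) hj
        · rw [h2 i j h, mul_zero]
      · intro h; exact absurd (Finset.mem_univ i) h
  intro i; exact key (r i) i rfl

private def psum {t : ℕ} (m : Fin t → ℕ) (n : ℕ) : ℕ :=
  ∑ x ∈ Finset.range n, (if h : x < t then m ⟨x, h⟩ + 1 else 0)

private lemma psum_succ {t : ℕ} (m : Fin t → ℕ) (i : ℕ) (hi : i < t) :
    psum m (i + 1) = psum m i + (m ⟨i, hi⟩ + 1) := by
  simp [psum, Finset.sum_range_succ, dif_pos hi]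

private lemma psum_mono {t : ℕ} (m : Fin t → ℕ) {a b : ℕ} (h : a ≤ b) :
    psum m a ≤ psum m b :=
  Finset.sum_le_sum_of_subset (Finset.range_subset_range.2 h)

private lemma psum_exists {t : ℕ} (m : Fin t → ℕ) :
    ∀ n, n ≤ t → ∀ d, d < psum m n →
      ∃ i : Fin t, (i : ℕ) < n ∧ ∃ j, j ≤ m i ∧ d = psum m (i : ℕ) + j := by
  intro n
  induction n with
  | zero => intro _ d hd; simp [psum] at hd
  | succ n ih =>
    intro hn d hd
    by_cases h : d < psum m n
    · obtain ⟨i, h1, j, h2, h3⟩ := ih (by omega) d h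
      exact ⟨i, by omega, j, h2, h3⟩
    · have hnt : n < t := by omega
      rw [psum_succ m n hnt] at hd
      refine ⟨⟨n, hnt⟩, by simp, d - psum m n, ?_, ?_⟩
      · show d - psum m n ≤ m ⟨n, hnt⟩; omega
      · show d = psum m n + (d - psum m n); omega

private lemma psum_unique {t : ℕ} (m : Fin t → ℕ) {i i' : Fin t} {j j' : ℕ}
    (hj : j ≤ m i) (hj' : j' ≤ m i')
    (h : psum m (i : ℕ) + j = psum m (i' : ℕ) + j') : i = i' ∧ j = j' := by
  have key : ∀ (a b : Fin t) (x y : ℕ), x ≤ m a → y ≤ m b →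
      psum m (a : ℕ) + x = psum m (b : ℕ) + y → (a : ℕ) ≤ (b : ℕ) := by
    intro a b x y hx hy hab
    by_contra hle
    have h1 : (b : ℕ) + 1 ≤ (a : ℕ) := by omega
    have h2 := psum_mono m h1
    rw [psum_succ m (b : ℕ) b.isLt] at h2
    simp only [Fin.eta] at h2
    omega
  have h1 : (i : ℕ) = (i' : ℕ) :=
    le_antisymm (key _ _ _ _ hj hj' h) (key _ _ _ _ hj' hj h.symm)
  have : i = i' := Fin.ext h1
  subst this
  omega

private def pvt {g t : ℕ} (hg : 0 < g) (c : Fin t → Fin g) (i : Fin t) (j : ℕ) : Fin g :=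
  ⟨((c i : ℕ) + j) % g, Nat.mod_lt _ hg⟩

private def nxt {t : ℕ} (ht : 0 < t) (i : Fin t) : Fin t :=
  if h : (i : ℕ) + 1 < t then ⟨(i : ℕ) + 1, h⟩ else ⟨0, ht⟩

private def keptRow {g t : ℕ} (hg : 0 < g) (c : Fin t → Fin g) (m : Fin t → ℕ)
    {s : Fin t → ℕ} (hs : ∀ i, 1 ≤ s i)
    (A : Matrix (Fin g ⊕ (Σ i : Fin t, Fin (s i)))
      (Fin g ⊕ (Σ i : Fin t, Fin (s i))) (Quaternion ℝ))
    (r : (Fin t ⊕ (Σ i : Fin t, Fin (2 * (m i / 2)))) ⊕ Fin t) :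
    (Fin g ⊕ (Σ i : Fin t, Fin (s i))) → Quaternion ℝ :=
  match r with
  | .inl (.inl i) => A (.inl (c i))
  | .inl (.inr ⟨i, j⟩) => A (.inl (pvt hg c i ((j : ℕ) + 1)))
  | .inr i => A (.inr ⟨i, ⟨0, hs i⟩⟩)

private def keptPiv {g t : ℕ} (hg : 0 < g) (c : Fin t → Fin g) (m : Fin t → ℕ)
    {s : Fin t → ℕ} (hs : ∀ i, 1 ≤ s i)
    (r : (Fin t ⊕ (Σ i : Fin t, Fin (2 * (m i / 2)))) ⊕ Fin t) :
    Fin g ⊕ (Σ i : Fin t, Fin (s i)) :=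
  match r with
  | .inl (.inl i) => .inr ⟨i, ⟨0, hs i⟩⟩
  | .inl (.inr ⟨i, j⟩) =>
      if ((j : ℕ) + 1) % 2 = 0 then .inl (pvt hg c i (j : ℕ))
      else .inl (pvt hg c i ((j : ℕ) + 2))
  | .inr i => .inl (c i)

private def keptRk {t : ℕ} (g : ℕ) (m : Fin t → ℕ)
    (r : (Fin t ⊕ (Σ i : Fin t, Fin (2 * (m i / 2)))) ⊕ Fin t) : ℕ :=
  match r with
  | .inl (.inl i) => (i : ℕ)
  | .inl (.inr ⟨i, j⟩) =>
      if ((j : ℕ) + 1) % 2 = 0 then t + ((i : ℕ) * g + ((j : ℕ) + 1))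
      else t + t * g + ((i : ℕ) * g + (g - ((j : ℕ) + 1)))
  | .inr i => t + t * g + (t * g + (i : ℕ))

set_option maxHeartbeats 1000000 in
/-- A canonical unicyclic quaternion unit gain graph: a cycle `C_g` on vertices
`Fin g` together with `t ≥ 1` pendant stars, the `i`-th one consisting of
`s i ≥ 1` pendant leaves attached to the cycle vertex `c i` (the attachment
vertices `c 0 < c 1 < ⋯ < c (t-1)` are listed in increasing order around the
cycle). The edge `x → x+1` of the cycle has unit gain `φc x`, and the leaf
`⟨i, j⟩ → c i` has unit gain `φs i j`.  Removing the pendant stars together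
with their attachment vertices leaves `t` paths on the cycle, the `i`-th of
order `m i`; `k` of the `m i` are even. Then the left row rank of the
adjacency matrix is `g + k`, and `g ≡ k (mod 2)`. -/
theorem rank_canonicalUnicyclic {g t : ℕ} (hg : 3 ≤ g) (ht : 1 ≤ t)
    (s : Fin t → ℕ) (hs : ∀ i, 1 ≤ s i)
    (c : Fin t → Fin g) (hc : StrictMono fun i => (c i : ℕ))
    (φc : Fin g → Quaternion ℝ) (hφc : ∀ x, ‖φc x‖ = 1)
    (φs : ∀ i : Fin t, Fin (s i) → Quaternion ℝ) (hφs : ∀ i j, ‖φs i j‖ = 1)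
    (A : Matrix (Fin g ⊕ (Σ i : Fin t, Fin (s i)))
                (Fin g ⊕ (Σ i : Fin t, Fin (s i))) (Quaternion ℝ))
    (hA : A = fun x y =>
      match x, y with
      | Sum.inl x, Sum.inl y =>
          if y = x + (⟨1, by omega⟩ : Fin g) then φc x
          else if x = y + (⟨1, by omega⟩ : Fin g) then star (φc y) else 0
      | Sum.inl x, Sum.inr ⟨i, j⟩ => if x = c i then star (φs i j) else 0
      | Sum.inr ⟨i, j⟩, Sum.inl x => if x = c i then φs i j else 0
      | Sum.inr _, Sum.inr _ => 0)
    (m : Fin t → ℕ)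
    (hm : ∀ i : Fin t, m i =
      if h : (i : ℕ) + 1 < t then (c ⟨(i : ℕ) + 1, h⟩ : ℕ) - (c i : ℕ) - 1
      else g - (c i : ℕ) + (c ⟨0, ht⟩ : ℕ) - 1)
    (k : ℕ) (hk : k = (Finset.univ.filter fun i => Even (m i)).card) :
    leftRowRank A = g + k ∧ g % 2 = k % 2 := by
  classical
  have hg0 : 0 < g := by omega
  have h1g : 1 < g := by omega
  have hclt : ∀ i : Fin t, (c i : ℕ) < g := fun i => (c i).isLt
  have hc0le : ∀ i : Fin t, (c ⟨0, ht⟩ : ℕ) ≤ (c i : ℕ) := fun i =>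
    hc.monotone (show (⟨0, ht⟩ : Fin t) ≤ i from Fin.mk_le_mk.mpr (Nat.zero_le _))
  -- partial sums of (m + 1) recover positions of attachment vertices
  have hPc : ∀ (i : ℕ) (hi : i < t), (c ⟨0, ht⟩ : ℕ) + psum m i = (c ⟨i, hi⟩ : ℕ) := by
    intro i
    induction i with
    | zero => intro hi; simp [psum]
    | succ i ih =>
      intro hi
      have hi' : i < t := by omega
      rw [psum_succ m i hi']
      have h3 := hm ⟨i, hi'⟩
      rw [dif_pos (show (⟨i, hi'⟩ : Fin t).val + 1 < t from hi)] at h3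
      have h3' : m ⟨i, hi'⟩ = (c ⟨i + 1, hi⟩ : ℕ) - (c ⟨i, hi'⟩ : ℕ) - 1 := h3
      have hlt : (c ⟨i, hi'⟩ : ℕ) < (c ⟨i + 1, hi⟩ : ℕ) := hc (Fin.mk_lt_mk.mpr (by omega))
      have h4 := ih hi'
      omega
  have htl : t - 1 < t := by omega
  have hPt : psum m t = g := by
    have h1 := hPc (t - 1) htl
    have h2 : psum m t = psum m (t - 1) + (m ⟨t - 1, htl⟩ + 1) := by
      have h5 := psum_succ m (t - 1) htl
      rw [show t - 1 + 1 = t by omega] at h5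
      exact h5
    have h3 := hm ⟨t - 1, htl⟩
    rw [dif_neg (show ¬((⟨t - 1, htl⟩ : Fin t).val + 1 < t) by show ¬(t - 1 + 1 < t); omega)] at h3
    have h4 := hclt ⟨t - 1, htl⟩
    have h5 := hc0le ⟨t - 1, htl⟩
    omega
  have hbound : ∀ (i : Fin t) (j : ℕ), j ≤ m i → psum m (i : ℕ) + j < g := by
    intro i j hj
    have h1 := psum_succ m (i : ℕ) i.isLt
    simp only [Fin.eta] at h1
    have h2 := psum_mono m (show (i : ℕ) + 1 ≤ t from i.isLt)
    omega
  have hupos : ∀ (i : Fin t) (j : ℕ),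
      (pvt hg0 c i j : ℕ) = ((c ⟨0, ht⟩ : ℕ) + (psum m (i : ℕ) + j)) % g := by
    intro i j
    show ((c i : ℕ) + j) % g = _
    have h1 := hPc (i : ℕ) i.isLt
    rw [Fin.eta] at h1
    rw [← h1, Nat.add_assoc]
  have hinj : ∀ (i i' : Fin t) (j j' : ℕ), j ≤ m i → j' ≤ m i' →
      (pvt hg0 c i j = pvt hg0 c i' j' ↔ i = i' ∧ j = j') := by
    intro i i' j j' hj hj'
    constructor
    · intro h
      have h1 : (pvt hg0 c i j : ℕ) = (pvt hg0 c i' j' : ℕ) := congrArg Fin.val h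
      rw [hupos, hupos] at h1
      have hme : (psum m (i : ℕ) + j) ≡ (psum m (i' : ℕ) + j') [MOD g] :=
        (Nat.ModEq.add_left_cancel' _ h1)
      have hx : psum m (i : ℕ) + j = psum m (i' : ℕ) + j' := by
        have b1 := hbound i j hj
        have b2 := hbound i' j' hj'
        rwa [Nat.ModEq, Nat.mod_eq_of_lt b1, Nat.mod_eq_of_lt b2] at hme
      exact psum_unique m hj hj' hx
    · rintro ⟨rfl, rfl⟩; rfl
  have hc0eq : ∀ i : Fin t, pvt hg0 c i 0 = c i := by
    intro i
    apply Fin.ext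
    show ((c i : ℕ) + 0) % g = (c i : ℕ)
    rw [Nat.add_zero, Nat.mod_eq_of_lt (hclt i)]
  have hsucc : ∀ (i : Fin t) (j : ℕ),
      pvt hg0 c i (j + 1) = pvt hg0 c i j + (⟨1, by omega⟩ : Fin g) := by
    intro i j
    apply Fin.ext
    rw [Fin.add_def]
    show ((c i : ℕ) + (j + 1)) % g = (((c i : ℕ) + j) % g + 1) % g
    rw [Nat.mod_add_mod, Nat.add_assoc]
  have hwrap : ∀ i : Fin t, pvt hg0 c i (m i + 1) = pvt hg0 c (nxt ht i) 0 := by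
    intro i
    apply Fin.ext
    rw [hupos, hupos]
    have hstep := psum_succ m (i : ℕ) i.isLt
    simp only [Fin.eta] at hstep
    by_cases h : (i : ℕ) + 1 < t
    · simp only [nxt, dif_pos h]
      show _ = ((c ⟨0, ht⟩ : ℕ) + (psum m ((i : ℕ) + 1) + 0)) % g
      rw [hstep]
      simp
    · simp only [nxt, dif_neg h]
      show _ = ((c ⟨0, ht⟩ : ℕ) + (psum m 0 + 0)) % g
      have h6 : (i : ℕ) + 1 = t := by have := i.isLt; omega
      have h7 : psum m ((i : ℕ) + 1) = g := by rw [h6, hPt]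
      rw [show psum m (0 : ℕ) = 0 by simp [psum], show psum m (i : ℕ) + (m i + 1) = g by omega]
      simp [Nat.add_mod_right]
  -- adjacency characterisation
  have hadj : ∀ (i i' : Fin t) (j j' : ℕ), j ≤ m i → j' ≤ m i' →
      (pvt hg0 c i' j' = pvt hg0 c i j + (⟨1, by omega⟩ : Fin g) ↔
        (j < m i ∧ i' = i ∧ j' = j + 1) ∨ (j = m i ∧ i' = nxt ht i ∧ j' = 0)) := by
    intro i i' j j' hj hj'
    rw [← hsucc i j]
    by_cases h : j < m i
    · rw [hinj i' i j' (j + 1) hj' h]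
      constructor
      · rintro ⟨rfl, rfl⟩; exact Or.inl ⟨h, rfl, rfl⟩
      · rintro (⟨_, rfl, rfl⟩ | ⟨h2, _, _⟩)
        · exact ⟨rfl, rfl⟩
        · omega
    · have hjm : j = m i := by omega
      subst hjm
      rw [hwrap i, hinj i' (nxt ht i) j' 0 hj' (Nat.zero_le _)]
      constructor
      · rintro ⟨rfl, rfl⟩; exact Or.inr ⟨rfl, rfl, rfl⟩
      · rintro (⟨h2, _, _⟩ | ⟨_, rfl, rfl⟩)
        · omega
        · exact ⟨rfl, rfl⟩
  have hmltg : ∀ i : Fin t, m i < g := by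
    intro i
    have := hbound i (m i) le_rfl
    omega
  have hti : ∀ i : Fin t, i = nxt ht i → m i = 1 → False := by
    intro i hi hmi
    by_cases h : (i : ℕ) + 1 < t
    · rw [nxt, dif_pos h] at hi
      have := congrArg Fin.val hi
      simp at this
    · rw [nxt, dif_neg h] at hi
      have h1 : (i : ℕ) = 0 := congrArg Fin.val hi
      have h2 : t = 1 := by have := i.isLt; omega
      have h3 : psum m 1 = psum m 0 + (m ⟨0, ht⟩ + 1) := psum_succ m 0 ht
      have h4 : psum m 0 = 0 := by simp [psum]
      have h5 : m ⟨0, ht⟩ = 1 := by rw [← hi]; exact hmi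
      have hPt1 : psum m 1 = g := by rw [← h2]; exact hPt
      omega
  -- matrix entry lemmas
  have hrow1 : ∀ x y : Fin g, A (Sum.inl x) (Sum.inl y) =
      if y = x + (⟨1, by omega⟩ : Fin g) then φc x
      else if x = y + (⟨1, by omega⟩ : Fin g) then star (φc y) else 0 := by
    intro x y; rw [hA]
  have hrow2 : ∀ (x : Fin g) (i : Fin t) (l : Fin (s i)),
      A (Sum.inl x) (Sum.inr ⟨i, l⟩) = if x = c i then star (φs i l) else 0 := by
    intro x i l; rw [hA]
  have hrow3 : ∀ (i : Fin t) (l : Fin (s i)) (x : Fin g),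
      A (Sum.inr ⟨i, l⟩) (Sum.inl x) = if x = c i then φs i l else 0 := by
    intro i l x; rw [hA]
  have hrow4 : ∀ (p q : Σ i : Fin t, Fin (s i)), A (Sum.inr p) (Sum.inr q) = 0 := by
    intro p q; rw [hA]
  have hent : ∀ (i i' : Fin t) (j j' : ℕ), j ≤ m i → j' ≤ m i' →
      A (Sum.inl (pvt hg0 c i j)) (Sum.inl (pvt hg0 c i' j')) =
        if (j < m i ∧ i' = i ∧ j' = j + 1) ∨ (j = m i ∧ i' = nxt ht i ∧ j' = 0)
        then φc (pvt hg0 c i j)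
        else if (j' < m i' ∧ i = i' ∧ j = j' + 1) ∨ (j' = m i' ∧ i = nxt ht i' ∧ j = 0)
        then star (φc (pvt hg0 c i' j')) else 0 := by
    intro i i' j j' hj hj'
    rw [hrow1]
    by_cases h1 : (j < m i ∧ i' = i ∧ j' = j + 1) ∨ (j = m i ∧ i' = nxt ht i ∧ j' = 0)
    · rw [if_pos ((hadj i i' j j' hj hj').mpr h1), if_pos h1]
    · rw [if_neg (fun hcon => h1 ((hadj i i' j j' hj hj').mp hcon)), if_neg h1]
      by_cases h2 : (j' < m i' ∧ i = i' ∧ j = j' + 1) ∨ (j' = m i' ∧ i = nxt ht i' ∧ j = 0)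
      · rw [if_pos ((hadj i' i j' j hj' hj).mpr h2), if_pos h2]
      · rw [if_neg (fun hcon => h2 ((hadj i' i j' j hj' hj).mp hcon)), if_neg h2]
  have hent2 : ∀ (i : Fin t) (j : ℕ) (i'' : Fin t) (l : Fin (s i'')), j ≤ m i →
      A (Sum.inl (pvt hg0 c i j)) (Sum.inr ⟨i'', l⟩) =
        if i = i'' ∧ j = 0 then star (φs i'' l) else 0 := by
    intro i j i'' l hj
    rw [hrow2]
    by_cases h : i = i'' ∧ j = 0
    · obtain ⟨rfl, rfl⟩ := h
      rw [if_pos (hc0eq i), if_pos ⟨rfl, rfl⟩]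
    · rw [if_neg h, if_neg]
      intro hcc
      rw [← hc0eq i''] at hcc
      obtain ⟨h1, h2⟩ := (hinj i i'' j 0 hj (Nat.zero_le _)).mp hcc
      exact h ⟨h1, h2⟩
  have hφc0 : ∀ x : Fin g, φc x ≠ 0 := by
    intro x h
    have := hφc x
    rw [h, norm_zero] at this
    norm_num at this
  have hφs0 : ∀ (i : Fin t) (l : Fin (s i)), φs i l ≠ 0 := by
    intro i l h
    have := hφs i l
    rw [h, norm_zero] at this
    norm_num at this
  -- the two neighbours of an internal path vertex are distinct
  have hne2 : ∀ (i : Fin t) (o : ℕ), 1 ≤ o → o ≤ m i →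
      pvt hg0 c i (o + 1) ≠ pvt hg0 c i (o - 1) := by
    intro i o h1 h2 hcc
    by_cases h : o < m i
    · obtain ⟨_, h4⟩ := (hinj i i (o + 1) (o - 1) h (by omega)).mp hcc
      omega
    · have hom : o = m i := by omega
      subst hom
      rw [hwrap i] at hcc
      obtain ⟨h3, h4⟩ := (hinj (nxt ht i) i 0 (m i - 1) (Nat.zero_le _) (by omega)).mp hcc
      have h5 : m i = 1 := by omega
      exact hti i h3.symm h5
  -- a cycle row of an internal path vertex as combination of two basis vectors
  have hdecomp : ∀ (i : Fin t) (o : ℕ), 1 ≤ o → o ≤ m i →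
      A (Sum.inl (pvt hg0 c i o)) =
        star (φc (pvt hg0 c i (o - 1))) •
            (Pi.single (Sum.inl (pvt hg0 c i (o - 1))) 1 :
              (Fin g ⊕ (Σ i : Fin t, Fin (s i))) → Quaternion ℝ)
          + φc (pvt hg0 c i o) •
            (Pi.single (Sum.inl (pvt hg0 c i (o + 1))) 1 :
              (Fin g ⊕ (Σ i : Fin t, Fin (s i))) → Quaternion ℝ) := by
    intro i o h1 h2
    have hsucc' : pvt hg0 c i (o - 1) + (⟨1, by omega⟩ : Fin g) = pvt hg0 c i o := by
      have := hsucc i (o - 1)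
      rw [show o - 1 + 1 = o by omega] at this
      exact this.symm
    funext y
    match y with
    | Sum.inr ⟨i'', l⟩ =>
      rw [hent2 i o i'' l h2, if_neg (by omega)]
      simp [Pi.single_apply]
    | Sum.inl x =>
      haveI : NeZero g := ⟨by omega⟩
      rw [hrow1]
      simp only [Pi.add_apply, Pi.smul_apply, Pi.single_apply, smul_eq_mul, Sum.inl.injEq]
      by_cases hx1 : x = pvt hg0 c i (o + 1)
      · subst hx1
        rw [if_pos (hsucc i o), if_neg (hne2 i o h1 h2), if_pos rfl]
        rw [mul_zero, mul_one, zero_add]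
      · by_cases hx2 : x = pvt hg0 c i (o - 1)
        · subst hx2
          rw [if_neg (fun hcon => hne2 i o h1 h2 (by rw [← hsucc i o] at hcon; exact hcon.symm ▸ rfl))]
          rw [if_pos hsucc'.symm, if_pos rfl, if_neg (fun hcon => hne2 i o h1 h2 hcon.symm)]
          rw [mul_one, mul_zero, add_zero]
        · rw [if_neg (fun hcon => hx1 (by rw [← hsucc i o] at hcon; exact hcon))]
          rw [if_neg, if_neg hx2, if_neg (fun hcon : x = _ => hx1 hcon)]
          · rw [mul_zero, mul_zero, add_zero]
          · intro hcon
            apply hx2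
            have : pvt hg0 c i (o - 1) + (⟨1, by omega⟩ : Fin g) = x + (⟨1, by omega⟩ : Fin g) := by
              rw [hsucc', hcon]
            exact (add_left_injective _ this).symm
  have hMle : ∀ i : Fin t, 2 * (m i / 2) ≤ m i := fun i => by omega
  have hsurj : ∀ x : Fin g, ∃ i : Fin t, ∃ j, j ≤ m i ∧ x = pvt hg0 c i j := by
    intro x
    have hd : ((x : ℕ) + g - (c ⟨0, ht⟩ : ℕ)) % g < g := Nat.mod_lt _ hg0
    obtain ⟨i, _, j, hj, hd2⟩ := psum_exists m t le_rfl _ (by rw [hPt]; exact hd)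
    refine ⟨i, j, hj, ?_⟩
    apply Fin.ext
    rw [hupos, ← hd2]
    have hc0g := hclt ⟨0, ht⟩
    rw [Nat.add_mod_mod,
      show (c ⟨0, ht⟩ : ℕ) + ((x : ℕ) + g - (c ⟨0, ht⟩ : ℕ)) = (x : ℕ) + g from by omega,
      Nat.add_mod_right, Nat.mod_eq_of_lt x.isLt]
  set SP := Submodule.span (Quaternion ℝ) (Set.range (keptRow hg0 c m hs A)) with hSPdef
  have hmem_row : ∀ r, keptRow hg0 c m hs A r ∈ SP :=
    fun r => Submodule.subset_span ⟨r, rfl⟩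
  have hsingle0 : ∀ i : Fin t,
      (Pi.single (Sum.inl (c i)) 1 : (Fin g ⊕ (Σ i : Fin t, Fin (s i))) → Quaternion ℝ) ∈ SP := by
    intro i
    have he : (Pi.single (Sum.inl (c i)) 1 : (Fin g ⊕ (Σ i : Fin t, Fin (s i))) → Quaternion ℝ)
        = (φs i ⟨0, hs i⟩)⁻¹ • A (Sum.inr ⟨i, ⟨0, hs i⟩⟩) := by
      funext y
      match y with
      | Sum.inl x =>
        rw [Pi.smul_apply, hrow3]
        simp only [smul_eq_mul, Pi.single_apply, Sum.inl.injEq]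
        by_cases hx : x = c i
        · rw [if_pos hx, if_pos hx, inv_mul_cancel₀ (hφs0 i _)]
        · rw [if_neg hx, if_neg hx, mul_zero]
      | Sum.inr p =>
        rw [Pi.smul_apply, hrow4]
        simp [Pi.single_apply]
    rw [he]
    exact Submodule.smul_mem _ _ (hmem_row (Sum.inr i))
  have hsingle_even : ∀ (i : Fin t) (n : ℕ), 2 * n ≤ 2 * (m i / 2) →
      (Pi.single (Sum.inl (pvt hg0 c i (2 * n))) 1 :
        (Fin g ⊕ (Σ i : Fin t, Fin (s i))) → Quaternion ℝ) ∈ SP := by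
    intro i n
    induction n with
    | zero =>
      intro _
      rw [show pvt hg0 c i (2 * 0) = c i from hc0eq i]
      exact hsingle0 i
    | succ n ih =>
      intro hle
      have h1 : 1 ≤ 2 * n + 1 := by omega
      have h2 : 2 * n + 1 ≤ m i := by omega
      have hr : A (Sum.inl (pvt hg0 c i (2 * n + 1))) ∈ SP := by
        have heq : keptRow hg0 c m hs A (Sum.inl (Sum.inr ⟨i, ⟨2 * n, by omega⟩⟩)) =
            A (Sum.inl (pvt hg0 c i (2 * n + 1))) := rfl
        rw [← heq]; exact hmem_row _
      rw [hdecomp i (2 * n + 1) h1 h2] at hr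
      have h3 : star (φc (pvt hg0 c i (2 * n + 1 - 1))) •
          (Pi.single (Sum.inl (pvt hg0 c i (2 * n + 1 - 1))) 1 :
            (Fin g ⊕ (Σ i : Fin t, Fin (s i))) → Quaternion ℝ) ∈ SP := by
        apply Submodule.smul_mem
        have h4 : 2 * n + 1 - 1 = 2 * n := by omega
        rw [h4]
        exact ih (by omega)
      have h5 := Submodule.sub_mem _ hr h3
      rw [add_sub_cancel_left] at h5
      have h6 := Submodule.smul_mem _ (φc (pvt hg0 c i (2 * n + 1)))⁻¹ h5
      rw [smul_smul, inv_mul_cancel₀ (hφc0 _), one_smul] at h6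
      rw [show 2 * (n + 1) = 2 * n + 1 + 1 from by omega]
      exact h6
  have hrowmem : ∀ w, A w ∈ SP := by
    intro w
    match w with
    | Sum.inr ⟨i, l⟩ =>
      have he : A (Sum.inr ⟨i, l⟩) =
          (φs i l * (φs i ⟨0, hs i⟩)⁻¹) • A (Sum.inr ⟨i, ⟨0, hs i⟩⟩) := by
        funext y
        match y with
        | Sum.inl x =>
          rw [Pi.smul_apply, hrow3, hrow3]
          simp only [smul_eq_mul]
          by_cases hx : x = c i
          · rw [if_pos hx, if_pos hx, mul_assoc, inv_mul_cancel₀ (hφs0 i _), mul_one]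
          · rw [if_neg hx, if_neg hx, mul_zero]
        | Sum.inr p =>
          rw [Pi.smul_apply, hrow4, hrow4]
          simp
      rw [he]
      exact Submodule.smul_mem _ _ (hmem_row (Sum.inr i))
    | Sum.inl x =>
      obtain ⟨i, j, hj, hx⟩ := hsurj x
      subst hx
      by_cases hj0 : j = 0
      · subst hj0
        rw [hc0eq i]
        exact hmem_row (Sum.inl (Sum.inl i))
      · by_cases hjM : j ≤ 2 * (m i / 2)
        · have heq : keptRow hg0 c m hs A (Sum.inl (Sum.inr ⟨i, ⟨j - 1, by omega⟩⟩)) =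
              A (Sum.inl (pvt hg0 c i j)) := by
            show A (Sum.inl (pvt hg0 c i ((j - 1) + 1))) = _
            rw [show j - 1 + 1 = j from by omega]
          rw [← heq]
          exact hmem_row _
        · have hjm : j = m i := by omega
          subst hjm
          rw [hdecomp i (m i) (by omega) le_rfl]
          apply Submodule.add_mem
          · apply Submodule.smul_mem
            have h2n : m i - 1 = 2 * ((m i - 1) / 2) := by omega
            rw [h2n]
            exact hsingle_even i ((m i - 1) / 2) (by omega)
          · apply Submodule.smul_mem
            rw [show m i + 1 = m i + 1 from rfl, hwrap i, hc0eq]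
            exact hsingle0 (nxt ht i)
  -- linear independence of the kept rows
  have hlt_tg : ∀ (i : Fin t) (o : ℕ), o < g → (i : ℕ) * g + o < t * g := by
    intro i o ho
    have h1 : ((i : ℕ) + 1) * g ≤ t * g := Nat.mul_le_mul_right g i.isLt
    have h2 : ((i : ℕ) + 1) * g = (i : ℕ) * g + g := by rw [add_mul, one_mul]
    omega
  have hrkinj : Function.Injective (keptRk g m :
      ((Fin t ⊕ (Σ i : Fin t, Fin (2 * (m i / 2)))) ⊕ Fin t) → ℕ) := by
    rintro ((i | ⟨i, j⟩) | i) ((i' | ⟨i', j'⟩) | i') h <;>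
      simp only [keptRk] at h
    · have : i = i' := Fin.ext h
      rw [this]
    · exfalso
      have hj' := j'.isLt
      have hm' := hMle i'
      have hg' := hmltg i'
      have hi := i.isLt
      have ha := hlt_tg i' ((j' : ℕ) + 1) (by omega)
      have hb := hlt_tg i' (g - ((j' : ℕ) + 1)) (by omega)
      split at h <;> omega
    · exfalso; have hi := i.isLt; omega
    · exfalso
      have hj := j.isLt
      have hm := hMle i
      have hg' := hmltg i
      have hi' := i'.isLt
      have ha := hlt_tg i ((j : ℕ) + 1) (by omega)
      have hb := hlt_tg i (g - ((j : ℕ) + 1)) (by omega)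
      split at h <;> omega
    · have hj := j.isLt
      have hj' := j'.isLt
      have hm := hMle i
      have hm' := hMle i'
      have hgi := hmltg i
      have hgi' := hmltg i'
      by_cases hp : ((j : ℕ) + 1) % 2 = 0 <;> by_cases hp' : ((j' : ℕ) + 1) % 2 = 0
      · rw [if_pos hp, if_pos hp'] at h
        obtain ⟨h1, h2⟩ := baseg (i := (i : ℕ)) (i' := (i' : ℕ))
          (show (j : ℕ) + 1 < g by omega)
          (show (j' : ℕ) + 1 < g by omega) (by omega)
        have hii : i = i' := Fin.ext h1
        subst hii
        have : j = j' := Fin.ext (by omega)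
        rw [this]
      · exfalso
        rw [if_pos hp, if_neg hp'] at h
        have := hlt_tg i ((j : ℕ) + 1) (by omega)
        omega
      · exfalso
        rw [if_neg hp, if_pos hp'] at h
        have := hlt_tg i' ((j' : ℕ) + 1) (by omega)
        omega
      · rw [if_neg hp, if_neg hp'] at h
        obtain ⟨h1, h2⟩ := baseg (i := (i : ℕ)) (i' := (i' : ℕ))
          (show g - ((j : ℕ) + 1) < g by omega)
          (show g - ((j' : ℕ) + 1) < g by omega) (by omega)
        have hii : i = i' := Fin.ext h1
        subst hii
        have : j = j' := Fin.ext (by omega)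
        rw [this]
    · exfalso
      have hj := j.isLt
      have hm := hMle i
      have hg' := hmltg i
      have ha := hlt_tg i ((j : ℕ) + 1) (by omega)
      have hb := hlt_tg i (g - ((j : ℕ) + 1)) (by omega)
      split at h <;> omega
    · exfalso; have hi' := i'.isLt; omega
    · exfalso
      have hj' := j'.isLt
      have hm' := hMle i'
      have hg' := hmltg i'
      have ha := hlt_tg i' ((j' : ℕ) + 1) (by omega)
      have hb := hlt_tg i' (g - ((j' : ℕ) + 1)) (by omega)
      split at h <;> omega
    · have : i = i' := Fin.ext (by omega)
      rw [this]
  have hdiag : ∀ r, keptRow hg0 c m hs A r (keptPiv hg0 c m hs r) ≠ 0 := by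
    rintro ((i | ⟨i, j⟩) | i) <;> simp only [keptRow, keptPiv]
    · rw [← hc0eq i, hent2 i 0 i _ (Nat.zero_le _), if_pos ⟨rfl, rfl⟩]
      intro h0
      rw [star_eq_zero] at h0
      exact hφs0 i _ h0
    · have hj := j.isLt
      have hm := hMle i
      by_cases hp : ((j : ℕ) + 1) % 2 = 0
      · rw [if_pos hp, hent i i ((j : ℕ) + 1) (j : ℕ) (by omega) (by omega)]
        rw [if_neg, if_pos (Or.inl ⟨by omega, rfl, rfl⟩)]
        · intro h0
          rw [star_eq_zero] at h0
          exact hφc0 _ h0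
        · rintro (⟨h3, -, h5⟩ | ⟨h3, -, h5⟩) <;> omega
      · rw [if_neg hp, hent i i ((j : ℕ) + 1) ((j : ℕ) + 2) (by omega) (by omega)]
        rw [if_pos (Or.inl ⟨by omega, rfl, rfl⟩)]
        exact hφc0 _
    · rw [hrow3, if_pos rfl]
      exact hφs0 i _
  have htri : ∀ r r', keptRk g m r < keptRk g m r' →
      keptRow hg0 c m hs A r' (keptPiv hg0 c m hs r) = 0 := by
    rintro ((i | ⟨i, j⟩) | i) ((i' | ⟨i', j'⟩) | i') h <;>
      simp only [keptRk] at h <;> simp only [keptRow, keptPiv]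
    -- (1,1)
    · rw [← hc0eq i', hent2 i' 0 i _ (Nat.zero_le _), if_neg]
      rintro ⟨rfl, -⟩; omega
    -- (1,2)
    · have hj' := j'.isLt
      have hm' := hMle i'
      rw [hent2 i' ((j' : ℕ) + 1) i _ (by omega), if_neg]
      rintro ⟨-, h2⟩; omega
    -- (1,3)
    · exact hrow4 _ _
    -- (2,1)
    · exfalso
      have hi' := i'.isLt
      split at h <;> omega
    -- (2,2)
    · have hj := j.isLt
      have hj' := j'.isLt
      have hm := hMle i
      have hm' := hMle i'
      have hgi := hmltg i
      have hgi' := hmltg i'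
      by_cases hp : ((j : ℕ) + 1) % 2 = 0 <;> by_cases hp' : ((j' : ℕ) + 1) % 2 = 0
      · rw [if_pos hp, if_pos hp'] at h
        rw [if_pos hp, hent i' i ((j' : ℕ) + 1) (j : ℕ) (by omega) (by omega),
          if_neg, if_neg]
        · rintro (⟨h3, rfl, h5⟩ | ⟨-, -, h5⟩) <;> omega
        · rintro (⟨h3, rfl, h5⟩ | ⟨-, -, h5⟩) <;> omega
      · rw [if_pos hp, if_neg hp'] at h
        rw [if_pos hp, hent i' i ((j' : ℕ) + 1) (j : ℕ) (by omega) (by omega),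
          if_neg, if_neg]
        · rintro (⟨h3, rfl, h5⟩ | ⟨-, -, h5⟩) <;> omega
        · rintro (⟨h3, rfl, h5⟩ | ⟨-, -, h5⟩) <;> omega
      · rw [if_neg hp, if_pos hp'] at h
        have := hlt_tg i' ((j' : ℕ) + 1) (by omega)
        rw [if_neg hp, hent i' i ((j' : ℕ) + 1) ((j : ℕ) + 2) (by omega) (by omega),
          if_neg, if_neg]
        · rintro (⟨h3, rfl, h5⟩ | ⟨-, -, h5⟩) <;> omega
        · rintro (⟨h3, rfl, h5⟩ | ⟨-, -, h5⟩) <;> omega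
      · rw [if_neg hp, if_neg hp'] at h
        rw [if_neg hp, hent i' i ((j' : ℕ) + 1) ((j : ℕ) + 2) (by omega) (by omega),
          if_neg, if_neg]
        · rintro (⟨h3, rfl, h5⟩ | ⟨-, -, h5⟩) <;> omega
        · rintro (⟨h3, rfl, h5⟩ | ⟨-, -, h5⟩) <;> omega
    -- (2,3)
    · have hj := j.isLt
      have hm := hMle i
      by_cases hp : ((j : ℕ) + 1) % 2 = 0
      · rw [if_pos hp, hrow3, if_neg]
        intro hcc
        rw [← hc0eq i'] at hcc
        obtain ⟨-, h2⟩ := (hinj i i' (j : ℕ) 0 (by omega) (Nat.zero_le _)).mp hcc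
        omega
      · rw [if_neg hp, hrow3, if_neg]
        intro hcc
        rw [← hc0eq i'] at hcc
        obtain ⟨-, h2⟩ := (hinj i i' ((j : ℕ) + 2) 0 (by omega) (Nat.zero_le _)).mp hcc
        omega
    -- (3,1)
    · exfalso
      have hi' := i'.isLt
      omega
    -- (3,2)
    · exfalso
      have hj' := j'.isLt
      have hm' := hMle i'
      have hgi' := hmltg i'
      have ha := hlt_tg i' ((j' : ℕ) + 1) (by omega)
      have hb := hlt_tg i' (g - ((j' : ℕ) + 1)) (by omega)
      split at h <;> omega
    -- (3,3)
    · rw [hrow3, if_neg]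
      intro hcc
      have : i = i' := hc.injective (congrArg Fin.val hcc)
      subst this
      omega
  have hli : LinearIndependent (Quaternion ℝ) (keptRow hg0 c m hs A) :=
    li_of_pivots _ (keptPiv hg0 c m hs) (keptRk g m) hrkinj hdiag htri
  have hspaneq : Submodule.span (Quaternion ℝ) (Set.range fun i => A i) = SP := by
    apply le_antisymm
    · rw [Submodule.span_le]
      rintro _ ⟨w, rfl⟩
      exact hrowmem w
    · rw [hSPdef, Submodule.span_le]
      rintro _ ⟨r, rfl⟩
      apply Submodule.subset_span
      rcases r with (i | ⟨i, j⟩) | i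
      · exact ⟨Sum.inl (c i), rfl⟩
      · exact ⟨Sum.inl (pvt hg0 c i ((j : ℕ) + 1)), rfl⟩
      · exact ⟨Sum.inr ⟨i, ⟨0, hs i⟩⟩, rfl⟩
  have hcard : Fintype.card ((Fin t ⊕ (Σ i : Fin t, Fin (2 * (m i / 2)))) ⊕ Fin t)
      = t + (∑ i : Fin t, 2 * (m i / 2)) + t := by
    simp [Fintype.card_sum, Fintype.card_sigma, Fintype.card_fin]
  have hsum1 : ∑ i : Fin t, (m i + 1) = g := by
    rw [← hPt]
    have he : psum m t = ∑ i : Fin t, (if h : (i : ℕ) < t then m ⟨(i : ℕ), h⟩ + 1 else 0) :=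
      (Fin.sum_univ_eq_sum_range (fun x => if h : x < t then m ⟨x, h⟩ + 1 else 0) t).symm
    rw [he]
    exact Finset.sum_congr rfl fun i _ => by rw [dif_pos i.isLt]
  have hsum3 : ∑ i : Fin t, m i + t = g := by
    have h1 : ∑ i : Fin t, (m i + 1) = ∑ i : Fin t, m i + ∑ _i : Fin t, 1 :=
      Finset.sum_add_distrib
    simp only [Finset.sum_const, Finset.card_univ, Fintype.card_fin, smul_eq_mul,
      mul_one] at h1
    omega
  have hsum2 : ∑ i : Fin t, (m i % 2) + ∑ i : Fin t, 2 * (m i / 2) = ∑ i : Fin t, m i := by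
    rw [← Finset.sum_add_distrib]
    exact Finset.sum_congr rfl fun i _ => by omega
  have hsum5 : ∑ i : Fin t, 2 * (m i / 2) = 2 * ∑ i : Fin t, (m i / 2) := by
    rw [Finset.mul_sum]
  have hkk : k + (Finset.univ.filter fun i => ¬ Even (m i)).card = t := by
    rw [hk]
    rw [Finset.card_filter_add_card_filter_not]
    simp [Finset.card_univ]
  have hsum4 : ∑ i : Fin t, (m i % 2) = (Finset.univ.filter fun i => ¬ Even (m i)).card := by
    rw [Finset.card_filter]
    exact Finset.sum_congr rfl fun i _ => by
      by_cases he : Even (m i)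
      · rw [if_neg (not_not_intro he)]
        exact Nat.even_iff.mp he
      · rw [if_pos he]
        exact Nat.odd_iff.mp (Nat.not_even_iff_odd.mp he)
  have hfr : leftRowRank A = t + (∑ i : Fin t, 2 * (m i / 2)) + t := by
    show Module.finrank (Quaternion ℝ)
      (Submodule.span (Quaternion ℝ) (Set.range fun i => A i)) = _
    rw [hspaneq, hSPdef]
    rw [finrank_span_eq_card hli]
    exact hcard
  constructor
  · rw [hfr]
    omega
  · omega
end
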